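/- arXiv:math/0301200 — 5 statements merged into one kernel-verified Lean document; each statement's English description precedes it below -/
import Mathlib

section
/- For every ε > 0 and every positive integer t₀, there exist integers T₀ ≥ t₀ and L₀ such that every graph G on n ≥ L₀ vertices admits a partition of its vertex set into t parts V₁, …, V_t with t₀ ≤ t ≤ T₀, where the parts differ in size by at most 1, and all but at most ε·t² of the pairs (Vᵢ, Vⱼ) are ε-regular. -/
open Finset SimpleGraph
open scoped Classical

/-- A pair `(A, B)` of vertex sets is `ε`-regular: for all `X ⊆ A`, `Y ⊆ B` with
`|X| ≥ ε|A|`, `|Y| ≥ ε|B|`, the densities satisfy `|d(X,Y) − d(A,B)| ≤ ε`. -/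
def IsRegularPair {V : Type*} (G : SimpleGraph V) [DecidableRel G.Adj]
    (ε : ℝ) (A B : Finset V) : Prop :=
  ∀ X ⊆ A, ∀ Y ⊆ B, ε * A.card ≤ X.card → ε * B.card ≤ Y.card →
    |(G.edgeDensity X Y : ℝ) - (G.edgeDensity A B : ℝ)| ≤ ε

/-!
Mathlib's `szemeredi_regularity` provides an equipartition of the vertex set into between `t₀`
and `bound ε t₀` parts with at most `ε t (t - 1) ≤ ε t²` non-uniform pairs of distinct parts.
Mathlib's `ε`-uniformity is the strict form of `ε`-regularity, so enumerating the parts by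
`Fin t` gives the required partition.
-/

theorem SimpleGraph.IsUniform.isRegularPair {V : Type*} {G : SimpleGraph V} [DecidableRel G.Adj]
    {ε : ℝ} {A B : Finset V} (h : G.IsUniform ε A B) : IsRegularPair G ε A B :=
  fun _ hX _ hY hXcard hYcard =>
    (h hX hY (by rwa [mul_comm]) (by rwa [mul_comm])).le

namespace Finpartition

variable {α : Type*} [DecidableEq α] {s : Finset α} (P : Finpartition s)

noncomputable def partsFin (i : Fin #P.parts) : Finset α :=
  P.parts.equivFin.symm i

theorem partsFin_mem (i : Fin #P.parts) : P.partsFin i ∈ P.parts :=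
  (P.parts.equivFin.symm i).2

theorem partsFin_injective : Function.Injective P.partsFin :=
  Subtype.coe_injective.comp P.parts.equivFin.symm.injective

theorem disjoint_partsFin {i j : Fin #P.parts} (hij : i ≠ j) :
    Disjoint (P.partsFin i) (P.partsFin j) :=
  P.disjoint (P.partsFin_mem i) (P.partsFin_mem j) (P.partsFin_injective.ne hij)

theorem biUnion_partsFin : univ.biUnion P.partsFin = s := by
  ext x
  refine ⟨fun hx => ?_, fun hx => ?_⟩
  · obtain ⟨i, -, hxi⟩ := mem_biUnion.1 hx
    exact P.le (P.partsFin_mem i) hxi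
  · obtain ⟨A, hA, hxA⟩ := P.exists_mem hx
    exact mem_biUnion.2 ⟨P.parts.equivFin ⟨A, hA⟩, mem_univ _, by simpa [partsFin] using hxA⟩

theorem IsEquipartition.card_partsFin_le {P : Finpartition s} (hP : P.IsEquipartition)
    (i j : Fin #P.parts) : #(P.partsFin i) ≤ #(P.partsFin j) + 1 :=
  hP (P.partsFin_mem i) (P.partsFin_mem j)

theorem card_filter_partsFin_le_card_filter_offDiag (r : Finset α → Finset α → Prop)
    [∀ u v, Decidable (r u v)] :
    #(univ.filter fun p : Fin #P.parts × Fin #P.parts =>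
        p.1 ≠ p.2 ∧ r (P.partsFin p.1) (P.partsFin p.2)) ≤
      #(P.parts.offDiag.filter fun uv => r uv.1 uv.2) := by
  refine card_le_card_of_injOn (fun p => (P.partsFin p.1, P.partsFin p.2)) ?_ ?_
  · rintro ⟨i, j⟩ hij
    simp only [coe_filter, mem_univ, true_and, Set.mem_ofPred_eq, mem_offDiag] at hij ⊢
    exact ⟨⟨P.partsFin_mem i, P.partsFin_mem j, P.partsFin_injective.ne hij.1⟩, hij.2⟩
  · rintro ⟨i, j⟩ - ⟨i', j'⟩ - h
    simp only [Prod.mk.injEq] at h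
    exact Prod.ext (P.partsFin_injective h.1) (P.partsFin_injective h.2)

theorem card_filter_not_isRegularPair_le_card_nonUniforms (G : SimpleGraph α)
    [DecidableRel G.Adj] (ε : ℝ) :
    #(univ.filter fun p : Fin #P.parts × Fin #P.parts =>
        p.1 ≠ p.2 ∧ ¬ IsRegularPair G ε (P.partsFin p.1) (P.partsFin p.2)) ≤
      #(P.nonUniforms G ε) := by
  refine (P.card_filter_partsFin_le_card_filter_offDiag fun u v => ¬ IsRegularPair G ε u v).trans
    (card_le_card fun ⟨u, v⟩ huv => ?_)
  obtain ⟨⟨hu, hv, hne⟩, hirregular⟩ := (mem_filter.1 huv).imp_left mem_offDiag.1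
  exact (P.mk_mem_nonUniforms G).2
    ⟨hu, hv, hne, fun huniform => hirregular huniform.isRegularPair⟩

theorem IsUniform.card_nonUniforms_le {V : Type*} [DecidableEq V] {A : Finset V}
    {P : Finpartition A} {G : SimpleGraph V} [DecidableRel G.Adj] {ε : ℝ} (hε : 0 ≤ ε)
    (hP : P.IsUniform G ε) : (#(P.nonUniforms G ε) : ℝ) ≤ ε * #P.parts ^ 2 := by
  have hsq : ((#P.parts * (#P.parts - 1) : ℕ) : ℝ) ≤ (#P.parts : ℝ) ^ 2 := by
    rw [sq]
    exact_mod_cast Nat.mul_le_mul_left _ (Nat.sub_le _ _)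
  calc (#(P.nonUniforms G ε) : ℝ) ≤ (#P.parts * (#P.parts - 1) : ℕ) * ε := hP
    _ ≤ ε * #P.parts ^ 2 := by rw [mul_comm]; gcongr

end Finpartition

theorem stmt_0_general (ε : ℝ) (hε : 0 < ε) (t₀ : ℕ) :
    ∃ T₀ L₀ : ℕ, t₀ ≤ T₀ ∧
      ∀ (n : ℕ), L₀ ≤ n → ∀ (G : SimpleGraph (Fin n)) (_ : DecidableRel G.Adj),
        ∃ (t : ℕ) (P : Fin t → Finset (Fin n)),
          t₀ ≤ t ∧ t ≤ T₀ ∧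
          (∀ i j, i ≠ j → Disjoint (P i) (P j)) ∧
          (Finset.univ.biUnion P = Finset.univ) ∧
          (∀ i j, (P i).card ≤ (P j).card + 1) ∧
          ((((Finset.univ : Finset (Fin t × Fin t))).filter
              (fun p => p.1 ≠ p.2 ∧ ¬ IsRegularPair G ε (P p.1) (P p.2))).card : ℝ)
            ≤ ε * t ^ 2 := by
  refine ⟨SzemerediRegularity.bound ε t₀, t₀, SzemerediRegularity.le_bound ε t₀,
    fun n hn G _ => ?_⟩
  obtain ⟨P, hequi, hlow, hup, hunif⟩ :=
    szemeredi_regularity G hε (by simpa using hn : t₀ ≤ Fintype.card (Fin n))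
  refine ⟨#P.parts, P.partsFin, hlow, hup, fun i j => P.disjoint_partsFin,
    P.biUnion_partsFin, hequi.card_partsFin_le, ?_⟩
  calc _ ≤ (#(P.nonUniforms G ε) : ℝ) := by
        exact_mod_cast P.card_filter_not_isRegularPair_le_card_nonUniforms G ε
    _ ≤ ε * #P.parts ^ 2 := hunif.card_nonUniforms_le hε.le

theorem stmt_0 (ε : ℝ) (hε : 0 < ε) (t₀ : ℕ) (ht₀ : 0 < t₀) :
    ∃ T₀ L₀ : ℕ, t₀ ≤ T₀ ∧
      ∀ (n : ℕ), L₀ ≤ n → ∀ (G : SimpleGraph (Fin n)) (_ : DecidableRel G.Adj),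
        ∃ (t : ℕ) (P : Fin t → Finset (Fin n)),
          t₀ ≤ t ∧ t ≤ T₀ ∧
          (∀ i j, i ≠ j → Disjoint (P i) (P j)) ∧
          (Finset.univ.biUnion P = Finset.univ) ∧
          (∀ i j, (P i).card ≤ (P j).card + 1) ∧
          ((((Finset.univ : Finset (Fin t × Fin t))).filter
              (fun p => p.1 ≠ p.2 ∧ ¬ IsRegularPair G ε (P p.1) (P p.2))).card : ℝ)
            ≤ ε * t ^ 2 :=
  stmt_0_general ε hε t₀
end

section
/- For every ε, d with 0 < ε < d ≤ 1 there exists δ > 0 such that: if (A, B) and (B, C) are ε-regular pairs each of density at least d, with |A| = |B| = |C| = m and m sufficiently large, then the number of paths a–b–c with a ∈ A, b ∈ B, c ∈ C is at least δ·m³. -/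
open Finset SimpleGraph
open scoped Classical
set_option maxHeartbeats 1000000

lemma ite_and_eq_mul (P Q : Prop) [Decidable P] [Decidable Q] :
    (if P ∧ Q then (1:ℕ) else 0) = (if P then 1 else 0) * (if Q then 1 else 0) := by
  by_cases hP : P <;> by_cases hQ : Q <;> simp [hP, hQ]

lemma card_inter_left {V : Type} (G : SimpleGraph V) [DecidableRel G.Adj] (A Y : Finset V) :
    (Rel.interedges G.Adj A Y).card = ∑ b ∈ Y, (A.filter fun a => G.Adj a b).card := by
  rw [show Rel.interedges G.Adj A Y = (A ×ˢ Y).filter (fun e => G.Adj e.1 e.2) from rfl,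
    Finset.card_filter, Finset.sum_product, Finset.sum_comm]
  exact Finset.sum_congr rfl fun b _ => (Finset.card_filter _ _).symm

lemma card_inter_right {V : Type} (G : SimpleGraph V) [DecidableRel G.Adj] (B C : Finset V) :
    (Rel.interedges G.Adj B C).card = ∑ b ∈ B, (C.filter fun c => G.Adj b c).card := by
  rw [show Rel.interedges G.Adj B C = (B ×ˢ C).filter (fun e => G.Adj e.1 e.2) from rfl,
    Finset.card_filter, Finset.sum_product]
  exact Finset.sum_congr rfl fun b _ => (Finset.card_filter _ _).symm

lemma dens_cast {V : Type} (G : SimpleGraph V) [DecidableRel G.Adj] (A Y : Finset V) :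
    (G.edgeDensity A Y : ℝ) = ((Rel.interedges G.Adj A Y).card : ℝ) / (A.card * Y.card) := by
  rw [SimpleGraph.edgeDensity, Rel.edgeDensity]
  push_cast
  ring

lemma paths_eq {V : Type} (G : SimpleGraph V) [DecidableRel G.Adj] (A B C : Finset V) :
    ((A ×ˢ B ×ˢ C).filter fun p => G.Adj p.1 p.2.1 ∧ G.Adj p.2.1 p.2.2).card
      = ∑ b ∈ B, (A.filter fun a => G.Adj a b).card * (C.filter fun c => G.Adj b c).card := by
  rw [Finset.card_filter, Finset.sum_product]
  simp_rw [Finset.sum_product]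
  rw [Finset.sum_comm]
  refine Finset.sum_congr rfl fun b _ => ?_
  rw [Finset.card_filter, Finset.card_filter, Finset.sum_mul_sum]
  simp_rw [ite_and_eq_mul]

theorem stmt_5 (ε d : ℝ) (hε : 0 < ε) (hεd : ε < d) (hd : d ≤ 1) :
    ∃ δ : ℝ, 0 < δ ∧ ∃ m₀ : ℕ, ∀ m : ℕ, m₀ ≤ m →
      ∀ {V : Type} [Fintype V] (G : SimpleGraph V) (_ : DecidableRel G.Adj)
        (A B C : Finset V),
        A.card = m → B.card = m → C.card = m →
        IsRegularPair G ε A B → IsRegularPair G ε B C →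
        d ≤ (G.edgeDensity A B : ℝ) → d ≤ (G.edgeDensity B C : ℝ) →
        δ * (m : ℝ) ^ 3 ≤
          (((A ×ˢ B ×ˢ C).filter fun p => G.Adj p.1 p.2.1 ∧ G.Adj p.2.1 p.2.2).card : ℝ) := by
  rcases lt_or_ge ε (1/2) with hhalf | hhalf
  · -- ε < 1/2 : regularity argument
    have hdε : (0:ℝ) < d - ε := sub_pos.2 hεd
    refine ⟨(1 - 2*ε) * (d - ε)^2, mul_pos (by linarith) (pow_pos hdε 2), 1, ?_⟩
    intro m hm V _ G _ A B C hA hB hC hAB hBC hdAB hdBC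
    have hm0 : (0:ℝ) < m := by exact_mod_cast Nat.lt_of_lt_of_le Nat.zero_lt_one hm
    set f : V → ℕ := fun b => (A.filter fun a => G.Adj a b).card with hf
    set g : V → ℕ := fun b => (C.filter fun c => G.Adj b c).card with hg
    set YA := B.filter (fun b => ((f b : ℝ) < (d - ε) * m)) with hYA
    set YC := B.filter (fun b => ((g b : ℝ) < (d - ε) * m)) with hYC
    have hYAcard : (YA.card : ℝ) < ε * m := by
      by_contra hcon
      push_neg at hcon
      have hYApos : (0:ℝ) < YA.card := lt_of_lt_of_le (by positivity) hcon
      have hYAne : YA.Nonempty := Finset.card_pos.1 (by exact_mod_cast hYApos)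
      have hreg := hAB A Finset.Subset.rfl YA (Finset.filter_subset _ _)
        (by rw [hA]; nlinarith) (by rw [hB]; exact hcon)
      have h1 : d - ε ≤ (G.edgeDensity A YA : ℝ) := by
        have := (abs_le.1 hreg).1; linarith
      have h2 : ((Rel.interedges G.Adj A YA).card : ℝ) < (d - ε) * m * YA.card := by
        rw [card_inter_left]
        push_cast
        calc ∑ b ∈ YA, (f b : ℝ) < ∑ _b ∈ YA, (d - ε) * m :=
              Finset.sum_lt_sum_of_nonempty hYAne (fun b hb => (Finset.mem_filter.1 hb).2)
          _ = (d - ε) * m * YA.card := by rw [Finset.sum_const]; push_cast; ring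
      rw [dens_cast, hA] at h1
      have h3 : (d - ε) * ((m : ℝ) * YA.card) ≤ ((Rel.interedges G.Adj A YA).card : ℝ) :=
        (le_div_iff₀ (by positivity)).1 h1
      nlinarith
    have hYCcard : (YC.card : ℝ) < ε * m := by
      by_contra hcon
      push_neg at hcon
      have hYCpos : (0:ℝ) < YC.card := lt_of_lt_of_le (by positivity) hcon
      have hYCne : YC.Nonempty := Finset.card_pos.1 (by exact_mod_cast hYCpos)
      have hreg := hBC YC (Finset.filter_subset _ _) C Finset.Subset.rfl
        (by rw [hB]; exact hcon) (by rw [hC]; nlinarith)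
      have h1 : d - ε ≤ (G.edgeDensity YC C : ℝ) := by
        have := (abs_le.1 hreg).1; linarith
      have h2 : ((Rel.interedges G.Adj YC C).card : ℝ) < (d - ε) * m * YC.card := by
        rw [card_inter_right]
        push_cast
        calc ∑ b ∈ YC, (g b : ℝ) < ∑ _b ∈ YC, (d - ε) * m :=
              Finset.sum_lt_sum_of_nonempty hYCne (fun b hb => (Finset.mem_filter.1 hb).2)
          _ = (d - ε) * m * YC.card := by rw [Finset.sum_const]; push_cast; ring
      rw [dens_cast, hC] at h1
      have h3 : (d - ε) * ((YC.card : ℝ) * m) ≤ ((Rel.interedges G.Adj YC C).card : ℝ) :=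
        (le_div_iff₀ (by positivity)).1 h1
      nlinarith
    set B' := B \ (YA ∪ YC) with hB'
    have hB'card : (1 - 2*ε) * m ≤ (B'.card : ℝ) := by
      have h1 : B.card ≤ B'.card + (YA ∪ YC).card := Finset.card_le_card_sdiff_add_card
      have h2 : (YA ∪ YC).card ≤ YA.card + YC.card := Finset.card_union_le _ _
      have h1' : (m : ℝ) ≤ (B'.card : ℝ) + ((YA ∪ YC).card : ℝ) := by
        rw [← hB]; exact_mod_cast h1
      have h2' : ((YA ∪ YC).card : ℝ) ≤ (YA.card : ℝ) + YC.card := by exact_mod_cast h2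
      nlinarith
    have key : ∀ b ∈ B', ((d - ε) * m)^2 ≤ (f b : ℝ) * (g b : ℝ) := by
      intro b hb
      rw [hB', Finset.mem_sdiff, Finset.mem_union, hYA, hYC] at hb
      obtain ⟨hbB, hnot⟩ := hb
      push_neg at hnot
      rw [Finset.mem_filter, Finset.mem_filter] at hnot
      push_neg at hnot
      have h1 : (d - ε) * m ≤ (f b : ℝ) := hnot.1 hbB
      have h2 : (d - ε) * m ≤ (g b : ℝ) := hnot.2 hbB
      rw [sq]
      exact mul_le_mul h1 h2 (by positivity) ((by positivity : (0:ℝ) ≤ (d-ε)*m).trans h1)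
    have hsum : ((B'.card : ℝ)) * ((d - ε) * m)^2 ≤
        ∑ b ∈ B, (f b : ℝ) * (g b : ℝ) := by
      calc (B'.card : ℝ) * ((d - ε) * m)^2 = ∑ _b ∈ B', ((d - ε) * m)^2 := by
            rw [Finset.sum_const]; push_cast; ring
        _ ≤ ∑ b ∈ B', (f b : ℝ) * (g b : ℝ) := Finset.sum_le_sum key
        _ ≤ ∑ b ∈ B, (f b : ℝ) * (g b : ℝ) :=
            Finset.sum_le_sum_of_subset_of_nonneg (Finset.sdiff_subset)
              (fun b _ _ => by positivity)
    rw [paths_eq]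
    push_cast
    nlinarith [hsum, hB'card, sq_nonneg ((d-ε)*(m:ℝ))]
  · -- 1/2 ≤ ε : then d > 1/2, count directly
    refine ⟨2*d - 1, by linarith, 1, ?_⟩
    intro m hm V _ G _ A B C hA hB hC hAB hBC hdAB hdBC
    have hm0 : (0:ℝ) < m := by exact_mod_cast Nat.lt_of_lt_of_le Nat.zero_lt_one hm
    set f : V → ℕ := fun b => (A.filter fun a => G.Adj a b).card with hf
    set g : V → ℕ := fun b => (C.filter fun c => G.Adj b c).card with hg
    have e1 : d * ((m:ℝ) * m) ≤ ((Rel.interedges G.Adj A B).card : ℝ) := by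
      rw [dens_cast, hA, hB] at hdAB
      exact (le_div_iff₀ (by positivity)).1 hdAB
    have e2 : d * ((m:ℝ) * m) ≤ ((Rel.interedges G.Adj B C).card : ℝ) := by
      rw [dens_cast, hB, hC] at hdBC
      exact (le_div_iff₀ (by positivity)).1 hdBC
    have hfsum : ∑ b ∈ B, (f b : ℝ) = ((Rel.interedges G.Adj A B).card : ℝ) := by
      rw [card_inter_left]; push_cast; rfl
    have hgsum : ∑ b ∈ B, (g b : ℝ) = ((Rel.interedges G.Adj B C).card : ℝ) := by
      rw [card_inter_right]; push_cast; rfl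
    have key : ∀ b ∈ B, (m:ℝ) * (f b) + (m:ℝ) * (g b) - (m:ℝ)^2 ≤ (f b : ℝ) * (g b : ℝ) := by
      intro b _
      have h1 : (f b : ℝ) ≤ m := by
        rw [← hA]; exact_mod_cast Finset.card_filter_le _ _
      have h2 : (g b : ℝ) ≤ m := by
        rw [← hC]; exact_mod_cast Finset.card_filter_le _ _
      nlinarith
    have hsum : (m:ℝ) * (∑ b ∈ B, (f b : ℝ)) + (m:ℝ) * (∑ b ∈ B, (g b : ℝ)) - m * m^2 ≤
        ∑ b ∈ B, (f b : ℝ) * (g b : ℝ) := by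
      have := Finset.sum_le_sum key
      rw [Finset.sum_sub_distrib, Finset.sum_add_distrib, ← Finset.mul_sum, ← Finset.mul_sum,
        Finset.sum_const, hB, nsmul_eq_mul] at this
      push_cast at this ⊢
      nlinarith [this]
    rw [paths_eq]
    push_cast
    rw [hfsum, hgsum] at hsum
    have t1 : (m:ℝ) * (d*((m:ℝ)*m)) ≤ (m:ℝ) * ((Rel.interedges G.Adj A B).card : ℝ) :=
      mul_le_mul_of_nonneg_left e1 hm0.le
    have t2 : (m:ℝ) * (d*((m:ℝ)*m)) ≤ (m:ℝ) * ((Rel.interedges G.Adj B C).card : ℝ) :=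
      mul_le_mul_of_nonneg_left e2 hm0.le
    nlinarith [t1, t2, hsum]
end

section
/- Let 0 < ε < d and let (V₁, V₂), (V₂, V₃), (V₁, V₃) be ε-regular pairs each with density at least d, where |V₁| = |V₂| = |V₃| = m. If ε ≤ d/2 and (d − ε)²(1 − 2ε)m ≥ 1, then G contains a triangle with one vertex in each Vᵢ. -/
open Finset SimpleGraph
open scoped Classical

lemma card_interedges_eq_sum_aux {V : Type*} (G : SimpleGraph V) [DecidableRel G.Adj]
    (s t : Finset V) :
    (G.interedges s t).card = ∑ x ∈ s, (t.filter (G.Adj x)).card := by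
  classical
  rw [SimpleGraph.interedges, Rel.interedges_eq_biUnion, card_biUnion]
  · simp
  · intro x hx y hy hxy
    simp only [Finset.disjoint_left, Finset.mem_map, Function.Embedding.coeFn_mk]
    rintro a ⟨u, hu, rfl⟩ ⟨w, hw, h⟩
    exact hxy (Prod.mk.injEq .. ▸ h).1.symm

lemma edgeDensity_pos_nonempty {V : Type*} (G : SimpleGraph V) [DecidableRel G.Adj]
    {s t : Finset V} (h : 0 < (G.edgeDensity s t : ℝ)) :
    ∃ v₂ ∈ s, ∃ v₃ ∈ t, G.Adj v₂ v₃ := by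
  by_contra hc
  push_neg at hc
  have : (G.interedges s t) = ∅ := by
    ext ⟨a, b⟩
    simp only [SimpleGraph.mk_mem_interedges_iff, Finset.notMem_empty, iff_false]
    rintro ⟨ha, hb, hab⟩
    exact hc a ha b hb hab
  have : (G.edgeDensity s t : ℝ) = 0 := by
    rw [SimpleGraph.edgeDensity, Rel.edgeDensity, ← SimpleGraph.interedges, this]
    simp
  linarith

theorem stmt_6 {V : Type*} (G : SimpleGraph V) [DecidableRel G.Adj]
    (ε d : ℝ) (m : ℕ) (V₁ V₂ V₃ : Finset V)
    (hε : 0 < ε) (hεd : ε < d)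
    (h1 : V₁.card = m) (h2 : V₂.card = m) (h3 : V₃.card = m)
    (hr12 : IsRegularPair G ε V₁ V₂) (hr23 : IsRegularPair G ε V₂ V₃)
    (hr13 : IsRegularPair G ε V₁ V₃)
    (hd12 : d ≤ (G.edgeDensity V₁ V₂ : ℝ)) (hd23 : d ≤ (G.edgeDensity V₂ V₃ : ℝ))
    (hd13 : d ≤ (G.edgeDensity V₁ V₃ : ℝ))
    (hεd2 : ε ≤ d / 2) (hm : 1 ≤ (d - ε) ^ 2 * (1 - 2 * ε) * m) :
    ∃ v₁ ∈ V₁, ∃ v₂ ∈ V₂, ∃ v₃ ∈ V₃,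
      G.Adj v₁ v₂ ∧ G.Adj v₂ v₃ ∧ G.Adj v₁ v₃ := by
  have hd1 : d ≤ 1 := hd12.trans (by exact_mod_cast G.edgeDensity_le_one V₁ V₂)
  have hdε : 0 < d - ε := by linarith
  have h2ε : 0 < 1 - 2 * ε := by
    by_contra h
    push_neg at h
    have : (d - ε) ^ 2 * (1 - 2 * ε) * m ≤ 0 := by
      apply mul_nonpos_of_nonpos_of_nonneg _ (Nat.cast_nonneg m)
      exact mul_nonpos_of_nonneg_of_nonpos (sq_nonneg _) h
    linarith
  have hmpos : (0 : ℝ) < m := by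
    rcases Nat.eq_zero_or_pos m with h | h
    · subst h; simp at hm; linarith
    · exact_mod_cast h
  have hε1 : ε ≤ 1 := by linarith
  -- bad sets
  have key : ∀ (W : Finset V), W.card = m → IsRegularPair G ε V₁ W →
      d ≤ (G.edgeDensity V₁ W : ℝ) →
      ((V₁.filter fun v => ((W.filter (G.Adj v)).card : ℝ) < (d - ε) * m).card : ℝ)
        < ε * m := by
    intro W hW hreg hdW
    set B := V₁.filter fun v => ((W.filter (G.Adj v)).card : ℝ) < (d - ε) * m with hB
    by_contra hc
    push_neg at hc
    have hBne : B.Nonempty := by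
      rw [← Finset.card_pos]
      rcases Nat.eq_zero_or_pos B.card with h | h
      · rw [h] at hc; norm_num at hc; nlinarith
      · exact h
    have hBpos : (0 : ℝ) < B.card := by exact_mod_cast Finset.card_pos.2 hBne
    have hreg' := hreg B (Finset.filter_subset _ _) W Finset.Subset.rfl
      (by rw [h1]; exact hc) (by rw [hW]; nlinarith)
    have hdB : d - ε ≤ (G.edgeDensity B W : ℝ) := by
      have := abs_le.1 hreg'
      linarith [this.1]
    -- edge count upper bound
    have hcount : ((G.interedges B W).card : ℝ) < B.card * ((d - ε) * m) := by
      rw [card_interedges_eq_sum_aux]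
      push_cast
      calc (∑ x ∈ B, ((W.filter (G.Adj x)).card : ℝ))
          < ∑ _x ∈ B, (d - ε) * m := by
            apply Finset.sum_lt_sum_of_nonempty hBne
            intro i hi
            exact (Finset.mem_filter.1 hi).2
        _ = B.card * ((d - ε) * m) := by rw [Finset.sum_const, nsmul_eq_mul]
    have hdens : (G.edgeDensity B W : ℝ) < d - ε := by
      have hden : (G.edgeDensity B W : ℝ)
          = ((G.interedges B W).card : ℝ) / (B.card * W.card) := by
        rw [SimpleGraph.edgeDensity, Rel.edgeDensity, ← SimpleGraph.interedges]
        push_cast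
        ring
      rw [hden, hW, div_lt_iff₀ (by positivity)]
      calc ((G.interedges B W).card : ℝ) < B.card * ((d - ε) * m) := hcount
        _ = (d - ε) * (B.card * m) := by ring
    linarith
  have hB2 := key V₂ h2 hr12 hd12
  have hB3 := key V₃ h3 hr13 hd13
  set B₂ := V₁.filter fun v => ((V₂.filter (G.Adj v)).card : ℝ) < (d - ε) * m with hB₂def
  set B₃ := V₁.filter fun v => ((V₃.filter (G.Adj v)).card : ℝ) < (d - ε) * m with hB₃def
  have hgood : (V₁ \ (B₂ ∪ B₃)).Nonempty := by
    rw [← Finset.card_pos]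
    by_contra h
    push_neg at h
    have hsub : B₂ ∪ B₃ ⊆ V₁ :=
      Finset.union_subset (Finset.filter_subset _ _) (Finset.filter_subset _ _)
    have h0 : (V₁ \ (B₂ ∪ B₃)).card = 0 := Nat.le_zero.1 h
    have heq := Finset.card_sdiff_add_card_eq_card hsub
    have hcard : (V₁.card : ℝ) ≤ (B₂ ∪ B₃).card := by
      exact_mod_cast (by omega : V₁.card ≤ (B₂ ∪ B₃).card)
    have hle : ((B₂ ∪ B₃).card : ℝ) ≤ B₂.card + B₃.card := by
      exact_mod_cast Finset.card_union_le _ _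
    rw [h1] at hcard
    nlinarith
  obtain ⟨v₁, hv₁⟩ := hgood
  rw [Finset.mem_sdiff, Finset.mem_union] at hv₁
  obtain ⟨hv₁V, hv₁B⟩ := hv₁
  push_neg at hv₁B
  obtain ⟨hn2, hn3⟩ := hv₁B
  have hN2 : (d - ε) * m ≤ ((V₂.filter (G.Adj v₁)).card : ℝ) := by
    by_contra h
    exact hn2 (Finset.mem_filter.2 ⟨hv₁V, by push_neg at h; exact h⟩)
  have hN3 : (d - ε) * m ≤ ((V₃.filter (G.Adj v₁)).card : ℝ) := by
    by_contra h
    exact hn3 (Finset.mem_filter.2 ⟨hv₁V, by push_neg at h; exact h⟩)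
  have hεle : ε ≤ d - ε := by linarith
  have hreg := hr23 (V₂.filter (G.Adj v₁)) (Finset.filter_subset _ _)
    (V₃.filter (G.Adj v₁)) (Finset.filter_subset _ _)
    (by rw [h2]; nlinarith) (by rw [h3]; nlinarith)
  have hdpos : 0 < (G.edgeDensity (V₂.filter (G.Adj v₁)) (V₃.filter (G.Adj v₁)) : ℝ) := by
    have := abs_le.1 hreg
    linarith [this.1]
  obtain ⟨v₂, hv₂, v₃, hv₃, hadj⟩ := edgeDensity_pos_nonempty G hdpos
  rw [Finset.mem_filter] at hv₂ hv₃
  exact ⟨v₁, hv₁V, v₂, hv₂.1, v₃, hv₃.1, hv₂.2, hadj, hv₃.2⟩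
end

section
/- If (A, B) is ε-regular with density d and ε < d, then the bipartite graph between A and B contains a matching of size at least (1 − ε)·min(|A|, |B|). -/
open Finset SimpleGraph
open scoped Classical

theorem stmt_10 {V : Type*} [DecidableEq V] (G : SimpleGraph V) [DecidableRel G.Adj]
    (ε : ℝ) (A B : Finset V) (hAB : Disjoint A B)
    (hreg : IsRegularPair G ε A B)
    (d : ℝ) (hd : d = (G.edgeDensity A B : ℝ)) (hεd : ε < d) :
    ∃ M : Finset (V × V),
      (∀ p ∈ M, p.1 ∈ A ∧ p.2 ∈ B ∧ G.Adj p.1 p.2) ∧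
      (∀ p ∈ M, ∀ q ∈ M, p ≠ q → p.1 ≠ q.1 ∧ p.2 ≠ q.2) ∧
      (1 - ε) * min A.card B.card ≤ (M.card : ℝ) := by
  set P : Finset (V × V) := (A ×ˢ B).filter (fun p => G.Adj p.1 p.2) with hP
  set S : Finset (Finset (V × V)) :=
    P.powerset.filter (fun M => ∀ p ∈ M, ∀ q ∈ M, p ≠ q → p.1 ≠ q.1 ∧ p.2 ≠ q.2) with hS
  have hSne : S.Nonempty := ⟨∅, by simp [hS]⟩
  obtain ⟨M, hMS, hMmax⟩ := S.exists_max_image (fun M => M.card) hSne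
  rw [hS, mem_filter, Finset.mem_powerset] at hMS
  obtain ⟨hMP, hMmatch⟩ := hMS
  have hmemP : ∀ p ∈ M, p.1 ∈ A ∧ p.2 ∈ B ∧ G.Adj p.1 p.2 := by
    intro p hp
    have := hMP hp
    rw [hP, mem_filter, Finset.mem_product] at this
    exact ⟨this.1.1, this.1.2, this.2⟩
  refine ⟨M, hmemP, hMmatch, ?_⟩
  by_contra hcon
  push_neg at hcon
  -- bounds
  have hd1 : d ≤ 1 := by
    rw [hd]; exact_mod_cast G.edgeDensity_le_one A B
  have hε1 : ε < 1 := lt_of_lt_of_le hεd hd1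
  set X : Finset V := A \ M.image Prod.fst with hX
  set Y : Finset V := B \ M.image Prod.snd with hY
  have hXA : X ⊆ A := sdiff_subset
  have hYB : Y ⊆ B := sdiff_subset
  have hXcard : (A.card : ℝ) ≤ X.card + M.card := by
    have h1 : A.card ≤ X.card + (M.image Prod.fst).card :=
      Finset.card_le_card_sdiff_add_card
    have h2 : (M.image Prod.fst).card ≤ M.card := Finset.card_image_le
    exact_mod_cast le_trans h1 (by omega)
  have hYcard : (B.card : ℝ) ≤ Y.card + M.card := by
    have h1 : B.card ≤ Y.card + (M.image Prod.snd).card :=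
      Finset.card_le_card_sdiff_add_card
    have h2 : (M.image Prod.snd).card ≤ M.card := Finset.card_image_le
    exact_mod_cast le_trans h1 (by omega)
  have hminA : ((min A.card B.card : ℕ) : ℝ) ≤ A.card := by
    exact_mod_cast Nat.cast_le.mpr (min_le_left _ _)
  have hminB : ((min A.card B.card : ℕ) : ℝ) ≤ B.card := by
    exact_mod_cast Nat.cast_le.mpr (min_le_right _ _)
  have hεX : ε * A.card ≤ X.card := by nlinarith
  have hεY : ε * B.card ≤ Y.card := by nlinarith
  have hdens := hreg X hXA Y hYB hεX hεY
  rw [← hd] at hdens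
  have hpos : 0 < (G.edgeDensity X Y : ℝ) := by
    have := abs_le.mp hdens
    linarith [this.1]
  -- extract an edge
  obtain ⟨x, hx, y, hy, hadj⟩ : ∃ x ∈ X, ∃ y ∈ Y, G.Adj x y := by
    by_contra hno
    push_neg at hno
    have : Rel.interedges G.Adj X Y = ∅ := by
      ext p
      simp only [Rel.mem_interedges_iff, Finset.notMem_empty, iff_false, not_and]
      intro h1 h2 h3
      exact hno p.1 h1 p.2 h2 h3
    have : (G.edgeDensity X Y : ℝ) = 0 := by
      rw [SimpleGraph.edgeDensity, Rel.edgeDensity, this]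
      simp
    linarith
  -- build a bigger matching
  have hxA : x ∈ A := hXA hx
  have hyB : y ∈ B := hYB hy
  have hxM : x ∉ M.image Prod.fst := (Finset.mem_sdiff.mp hx).2
  have hyM : y ∉ M.image Prod.snd := (Finset.mem_sdiff.mp hy).2
  have hnew : (x, y) ∉ M := fun h => hxM (Finset.mem_image_of_mem Prod.fst h)
  set M' : Finset (V × V) := insert (x, y) M with hM'
  have hM'S : M' ∈ S := by
    rw [hS, mem_filter, Finset.mem_powerset]
    constructor
    · intro p hp
      rw [hM', Finset.mem_insert] at hp
      rcases hp with rfl | hp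
      · rw [hP, mem_filter, Finset.mem_product]
        exact ⟨⟨hxA, hyB⟩, hadj⟩
      · exact hMP hp
    · intro p hp q hq hpq
      rw [hM', Finset.mem_insert] at hp hq
      rcases hp with rfl | hp <;> rcases hq with rfl | hq
      · exact absurd rfl hpq
      · exact ⟨fun h => hxM (Finset.mem_image.mpr ⟨q, hq, h.symm⟩),
          fun h => hyM (Finset.mem_image.mpr ⟨q, hq, h.symm⟩)⟩
      · exact ⟨fun h => hxM (Finset.mem_image.mpr ⟨p, hp, h⟩),
          fun h => hyM (Finset.mem_image.mpr ⟨p, hp, h⟩)⟩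
      · exact hMmatch p hp q hq hpq
  have : M'.card ≤ M.card := hMmax M' hM'S
  rw [hM', Finset.card_insert_of_notMem hnew] at this
  omega
end

section
/- Suppose (A, B) is ε-regular with density d ≥ 2ε, |A| = |B| = m, and let k ≤ (1 − 3ε)m. Then for any set of k vertices a₁, …, a_k ∈ A, avoiding at most εm exceptional vertices of A, one can greedily choose distinct neighbors b₁, …, b_k ∈ B with aᵢbᵢ ∈ E(G) for all i, provided (d − ε)m ≥ k + εm. -/
open Finset SimpleGraph
open scoped Classical

/-!
Call a vertex of `A` exceptional if it has fewer than `(d - ε)|B|` neighbours in `B`.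
The exceptional vertices span density `< d - ε` with `B`, so by `ε`-regularity there are
at most `ε|A|` of them. Every other vertex has at least `(d - ε)m ≥ k` neighbours in `B`,
so any `k` of them satisfy Hall's condition and receive distinct neighbours.
-/

theorem Finset.exists_injective_forall_mem_of_card_le {ι α : Type*} [Fintype ι] [DecidableEq α]
    (t : ι → Finset α) (h : ∀ i, Fintype.card ι ≤ #(t i)) :
    ∃ f : ι → α, Function.Injective f ∧ ∀ i, f i ∈ t i := by
  refine (all_card_le_biUnion_card_iff_exists_injective t).mp fun s => ?_
  obtain rfl | ⟨i, hi⟩ := s.eq_empty_or_nonempty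
  · simp
  · calc #s ≤ Fintype.card ι := card_le_univ s
      _ ≤ #(t i) := h i
      _ ≤ #(s.biUnion t) := card_le_card (subset_biUnion_of_mem t hi)

namespace SimpleGraph

variable {V : Type*} (G : SimpleGraph V) [DecidableRel G.Adj]

theorem card_interedges_eq_sum (s t : Finset V) :
    #(G.interedges s t) = ∑ a ∈ s, #{b ∈ t | G.Adj a b} := by
  simp only [interedges_def, card_filter, sum_product]

theorem edgeDensity_lt_of_forall_card_filter_adj_lt {s t : Finset V} {δ : ℝ}
    (hs : s.Nonempty) (h : ∀ a ∈ s, (#{b ∈ t | G.Adj a b} : ℝ) < δ * #t) :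
    (G.edgeDensity s t : ℝ) < δ := by
  have ht : 0 < #t := by
    obtain ⟨a, ha⟩ := hs
    by_contra h0
    have := h a ha
    rw [Nat.eq_zero_of_not_pos h0, Nat.cast_zero, mul_zero] at this
    exact this.not_ge (Nat.cast_nonneg _)
  have hpos : (0 : ℝ) < #s * #t := mul_pos (mod_cast hs.card_pos) (mod_cast ht)
  have hsum : (#(G.interedges s t) : ℝ) < δ * (#s * #t) := by
    calc (#(G.interedges s t) : ℝ) = ∑ a ∈ s, (#{b ∈ t | G.Adj a b} : ℝ) := by
          rw [card_interedges_eq_sum]; push_cast; rfl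
      _ < ∑ _a ∈ s, δ * #t := sum_lt_sum_of_nonempty hs h
      _ = δ * (#s * #t) := by rw [sum_const, nsmul_eq_mul]; ring
  rw [edgeDensity_def]
  push_cast
  rwa [div_lt_iff₀ hpos]

noncomputable def lowDegreeIn (A B : Finset V) (c : ℝ) : Finset V :=
  {a ∈ A | (#{b ∈ B | G.Adj a b} : ℝ) < c}

end SimpleGraph

namespace IsRegularPair

variable {V : Type*} {G : SimpleGraph V} [DecidableRel G.Adj] {ε : ℝ} {A B : Finset V}

theorem nonneg (h : IsRegularPair G ε A B) : 0 ≤ ε := by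
  by_contra! hε
  have hA : ε * #A ≤ #A := by nlinarith [(#A).cast_nonneg (α := ℝ)]
  have hB : ε * #B ≤ #B := by nlinarith [(#B).cast_nonneg (α := ℝ)]
  have := h A subset_rfl B subset_rfl hA hB
  simp only [sub_self, abs_zero] at this
  linarith

theorem card_lowDegreeIn_le (h : IsRegularPair G ε A B) (hε : ε * #B ≤ #B) :
    (#(G.lowDegreeIn A B ((G.edgeDensity A B - ε) * #B)) : ℝ) ≤ ε * #A := by
  set X := G.lowDegreeIn A B ((G.edgeDensity A B - ε) * #B)
  by_contra! hX
  have hXne : X.Nonempty := by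
    rw [← card_pos, ← Nat.cast_pos (α := ℝ)]
    exact (mul_nonneg h.nonneg (#A).cast_nonneg).trans_lt hX
  have hlow := G.edgeDensity_lt_of_forall_card_filter_adj_lt hXne fun a ha => (mem_filter.mp ha).2
  have hclose := h X (filter_subset _ _) B subset_rfl hX.le hε
  linarith [(abs_le.mp hclose).1]

end IsRegularPair

theorem stmt_11_general {V : Type*} [DecidableEq V] (G : SimpleGraph V) [DecidableRel G.Adj]
    (ε : ℝ) (m k : ℕ) (A B : Finset V)
    (hA : A.card = m) (hB : B.card = m)
    (hreg : IsRegularPair G ε A B)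
    (d : ℝ) (hd : d = (G.edgeDensity A B : ℝ))
    (hgreedy : (k : ℝ) + ε * m ≤ (d - ε) * m) :
    ∃ Exc ⊆ A, (Exc.card : ℝ) ≤ ε * m ∧
      ∀ a : Fin k → V, Function.Injective a → (∀ i, a i ∈ A \ Exc) →
        ∃ b : Fin k → V, Function.Injective b ∧
          ∀ i, b i ∈ B ∧ G.Adj (a i) (b i) := by
  have hεm : 0 ≤ ε * m := mul_nonneg hreg.nonneg m.cast_nonneg
  have hd1 : d ≤ 1 := hd ▸ mod_cast G.edgeDensity_le_one A B
  have hεB : ε * #B ≤ #B := by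
    rw [hB]; nlinarith [k.cast_nonneg (α := ℝ), m.cast_nonneg (α := ℝ)]
  refine ⟨G.lowDegreeIn A B ((d - ε) * m), filter_subset _ _, ?_, fun a _ ha => ?_⟩
  · simpa only [hA, hB, hd] using hreg.card_lowDegreeIn_le hεB
  · obtain ⟨b, hb, hbN⟩ := exists_injective_forall_mem_of_card_le
      (fun i => {b ∈ B | G.Adj (a i) b}) fun i => by
        have hai := mem_sdiff.mp (ha i)
        have : (d - ε) * m ≤ #{b ∈ B | G.Adj (a i) b} := by
          by_contra! hlt
          exact hai.2 (mem_filter.mpr ⟨hai.1, hlt⟩)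
        rw [Fintype.card_fin]
        exact_mod_cast (show (k : ℝ) ≤ #{b ∈ B | G.Adj (a i) b} by linarith)
    exact ⟨b, hb, fun i => mem_filter.mp (hbN i)⟩

theorem stmt_11 {V : Type*} [DecidableEq V] (G : SimpleGraph V) [DecidableRel G.Adj]
    (ε : ℝ) (m k : ℕ) (A B : Finset V)
    (hA : A.card = m) (hB : B.card = m)
    (hreg : IsRegularPair G ε A B)
    (d : ℝ) (hd : d = (G.edgeDensity A B : ℝ)) (hdε : 2 * ε ≤ d)
    (hk : (k : ℝ) ≤ (1 - 3 * ε) * m)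
    (hgreedy : (k : ℝ) + ε * m ≤ (d - ε) * m) :
    ∃ Exc ⊆ A, (Exc.card : ℝ) ≤ ε * m ∧
      ∀ a : Fin k → V, Function.Injective a → (∀ i, a i ∈ A \ Exc) →
        ∃ b : Fin k → V, Function.Injective b ∧
          ∀ i, b i ∈ B ∧ G.Adj (a i) (b i) :=
  stmt_11_general G ε m k A B hA hB hreg d hd hgreedy
end
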